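/- Let n, r be natural numbers with r ≥ 1 and n ≥ 2r+2, and let J̃ be the antisymmetric n×n real matrix whose top-left 2r×2r block is J̄_{2r} and whose remaining entries are 0. Let V be a linear subspace of the antisymmetric n×n real matrices such that J̃ + v has rank 2r for every v ∈ V. Fix two distinct indices j₁, j₂ ∈ {2r+1, …, n}. Then the image of V under the linear map sending v to the pair of vectors (v_{1,j₁},…,v_{2r,j₁}, v_{1,j₂},…,v_{2r,j₂}) ∈ ℝ^{4r} (the j₁-th and j₂-th columns of v restricted to the first 2r rows) has dimension at most 2r. -/

import Mathlib

open Matrix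

/-- The 2×2 matrix `J = [[0,1],[-1,0]]`. -/
def Jmat : Matrix (Fin 2) (Fin 2) ℝ := !![0, 1; -1, 0]

/-- The `2r × 2r` block-diagonal matrix with `r` diagonal blocks equal to `J`. -/
def Jbar (r : ℕ) : Matrix (Fin (2 * r)) (Fin (2 * r)) ℝ :=
  Matrix.of fun i j =>
    if (i : ℕ) / 2 = (j : ℕ) / 2 then
      Jmat ⟨(i : ℕ) % 2, by omega⟩ ⟨(j : ℕ) % 2, by omega⟩
    else 0

/-- The antisymmetric `n × n` matrix whose top-left `2r × 2r` block is `J̄₂ᵣ` and whose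
remaining entries are `0`. -/
def Jtilde (n r : ℕ) : Matrix (Fin n) (Fin n) ℝ :=
  Matrix.of fun i j =>
    if hi : (i : ℕ) < 2 * r then
      if hj : (j : ℕ) < 2 * r then Jbar r ⟨(i : ℕ), hi⟩ ⟨(j : ℕ), hj⟩ else 0
    else 0

/-- The linear map sending a matrix to its `(i,j)` entry. -/
def entryLin (n : ℕ) (i j : Fin n) : Matrix (Fin n) (Fin n) ℝ →ₗ[ℝ] ℝ where
  toFun v := v i j
  map_add' _ _ := rfl
  map_smul' _ _ := rfl

/-! For `v ∈ V` let `x, y ∈ ℝ^{2r}` be the top parts of the columns `j₁, j₂` of `v`. The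
principal minor of `J̃ + t v` on the rows and columns `1, …, 2r, j₁, j₂` has size `2r + 2 > rank`,
so it vanishes for every `t`. Pulling the factor `t` out of its last two rows and letting `t → 0`
forces `v_{j₁ j₂} = 0`; pulling `t` out of the last two columns as well and letting `t → 0` again
leaves the Schur complement `(x, y)ᵀ J̄⁻¹ (x, y)`, so `xᵀ J̄⁻¹ y = 0`. Thus the image of `V` is
totally isotropic for the nondegenerate symmetric form `xᵀ J̄⁻¹ y' + x'ᵀ J̄⁻¹ y` on `ℝ^{4r}`, and a
totally isotropic subspace has at most half the dimension. -/

lemma Matrix.det_fromBlocks_smul_bottom {R m o : Type*} [CommRing R] [Fintype m] [Fintype o]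
    [DecidableEq m] [DecidableEq o] (A : Matrix m m R) (B : Matrix m o R) (C : Matrix o m R)
    (D : Matrix o o R) (t : R) :
    (fromBlocks A B (t • C) (t • D)).det = t ^ Fintype.card o * (fromBlocks A B C D).det := by
  rw [show fromBlocks A B (t • C) (t • D) = fromBlocks 1 0 0 (t • 1) * fromBlocks A B C D by
      simp [fromBlocks_multiply],
    det_mul, det_fromBlocks_zero₂₁, det_smul, det_one, det_one, one_mul, mul_one]

lemma Matrix.det_fromBlocks_smul_right {R m o : Type*} [CommRing R] [Fintype m] [Fintype o]
    [DecidableEq m] [DecidableEq o] (A : Matrix m m R) (B : Matrix m o R) (C : Matrix o m R)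
    (D : Matrix o o R) (t : R) :
    (fromBlocks A (t • B) C (t • D)).det = t ^ Fintype.card o * (fromBlocks A B C D).det := by
  rw [show fromBlocks A (t • B) C (t • D) = fromBlocks A B C D * fromBlocks 1 0 0 (t • 1) by
      simp [fromBlocks_multiply],
    det_mul, det_fromBlocks_zero₂₁, det_smul, det_one, det_one, one_mul]
  ring

lemma Matrix.det_submatrix_eq_zero_of_rank_lt {K m ι : Type*} [Field K] [Fintype m] [Fintype ι]
    [DecidableEq ι] (X : Matrix m m K) (f : ι → m) (h : X.rank < Fintype.card ι) :
    (X.submatrix f f).det = 0 := by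
  by_contra hdet
  have hfull := rank_of_isUnit _ ((isUnit_iff_isUnit_det _).2 (isUnit_iff_ne_zero.2 hdet))
  have := rank_submatrix_le X f f
  omega

lemma Matrix.eq_zero_of_transpose_eq_neg_of_det_eq_zero {M : Matrix (Fin 2) (Fin 2) ℝ}
    (hM : Mᵀ = -M) (hdet : M.det = 0) : M = 0 := by
  have hM' : ∀ i j, M j i = -M i j := fun i j => congrFun (congrFun hM i) j
  have h00 : M 0 0 = 0 := by linarith [hM' 0 0]
  have h11 : M 1 1 = 0 := by linarith [hM' 1 1]
  have h01 : M 0 1 = 0 := by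
    rw [det_fin_two, h00, hM' 0 1] at hdet
    nlinarith
  ext i j
  fin_cases i <;> fin_cases j <;> simp [h00, h11, h01, hM' 0 1]

lemma apply_zero_eq_zero_of_pow_mul_eq_zero {g : ℝ → ℝ} (hg : Continuous g) (k : ℕ)
    (h : ∀ t, t ^ k * g t = 0) : g 0 = 0 := by
  have : g = 0 := hg.ext_on (dense_compl_singleton 0) continuous_const fun t ht =>
    (mul_eq_zero.1 (h t)).resolve_left (pow_ne_zero _ ht)
  exact congrFun this 0

lemma Matrix.transpose_mul_inv_mul_toBlocks₁₂_eq_zero {m : Type*} [Fintype m] [DecidableEq m]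
    {K : Matrix m m ℝ} (hK : IsUnit K.det) (hKt : Kᵀ = -K)
    {w : Matrix (m ⊕ Fin 2) (m ⊕ Fin 2) ℝ} (hw : wᵀ = -w)
    (h : ∀ t : ℝ, (fromBlocks K 0 0 0 + t • w).det = 0) :
    w.toBlocks₁₂ᵀ * K⁻¹ * w.toBlocks₁₂ = 0 := by
  obtain ⟨a, b, c, d, rfl⟩ : ∃ a b c d, w = fromBlocks a b c d :=
    ⟨_, _, _, _, (fromBlocks_toBlocks w).symm⟩
  rw [fromBlocks_transpose, fromBlocks_neg, fromBlocks_inj] at hw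
  obtain ⟨-, -, hbc, hd⟩ := hw
  have hX : ∀ t : ℝ, fromBlocks K 0 0 0 + t • fromBlocks a b c d
      = fromBlocks (K + t • a) (t • b) (t • c) (t • d) := by
    simp [fromBlocks_smul, fromBlocks_add]
  have hd0 : d = 0 := by
    refine eq_zero_of_transpose_eq_neg_of_det_eq_zero hd ?_
    have := apply_zero_eq_zero_of_pow_mul_eq_zero
      (g := fun t => (fromBlocks (K + t • a) (t • b) c d).det) (by fun_prop) 2 fun t => by
        simpa [← hX, h] using (det_fromBlocks_smul_bottom (K + t • a) (t • b) c d t).symm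
    simpa [det_fromBlocks_zero₁₂, hK.ne_zero] using this
  subst hd0
  have hr := apply_zero_eq_zero_of_pow_mul_eq_zero
    (g := fun t => (fromBlocks (K + t • a) b c 0).det) (by fun_prop) 4 fun t => by
      have hcols := det_fromBlocks_smul_right (K + t • a) b c 0 t
      have hrows := det_fromBlocks_smul_bottom (K + t • a) (t • b) c 0 t
      simp only [smul_zero, Fintype.card_fin] at hcols hrows
      have := h t
      rw [hX, smul_zero, hrows, hcols] at this
      linear_combination this
  let := K.invertibleOfIsUnitDet hK
  have hKinv : K⁻¹ᵀ = -K⁻¹ := by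
    rw [transpose_nonsing_inv, hKt]
    exact inv_eq_left_inv (by rw [neg_mul_neg, nonsing_inv_mul _ hK])
  have hc : c = -bᵀ := by rw [hbc, neg_neg]
  simp only [toBlocks_fromBlocks₁₂]
  refine eq_zero_of_transpose_eq_neg_of_det_eq_zero ?_ ?_
  · simp [transpose_mul, hKinv, Matrix.mul_assoc]
  · -- `det (fromBlocks K b c 0) = det K * det (-c K⁻¹ b)` by the Schur complement of `K`
    simpa [det_fromBlocks₁₁, hK.ne_zero, hc, invOf_eq_nonsing_inv, Matrix.mul_assoc] using hr

lemma LinearMap.BilinForm.two_mul_finrank_le_of_isotropic {K V : Type*} [Field K] [NeZero (2 : K)]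
    [AddCommGroup V] [Module K V] [FiniteDimensional K V] {B : LinearMap.BilinForm K V}
    (hB : B.IsSymm) (hB' : B.Nondegenerate) (W : Submodule K V) (hW : ∀ u ∈ W, B u u = 0) :
    2 * Module.finrank K W ≤ Module.finrank K V := by
  have hle : W ≤ B.orthogonal W := fun u hu w hw => by
    show B w u = 0
    rw [hB.polarization, hW _ (W.add_mem hw hu), hW _ hw, hW _ hu]; simp
  have := Submodule.finrank_mono hle
  rw [LinearMap.BilinForm.finrank_orthogonal hB'] at this
  have := W.finrank_le
  omega

lemma finrank_le_of_forall_dotProduct_mulVec_eq_zero {m : Type*} [Fintype m] [DecidableEq m]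
    {L : Matrix m m ℝ} (hL : IsUnit L.det) (W : Submodule ℝ (m ⊕ m → ℝ))
    (hW : ∀ u ∈ W, (u ∘ Sum.inl) ⬝ᵥ L *ᵥ (u ∘ Sum.inr) = 0) :
    Module.finrank ℝ W ≤ Fintype.card m := by
  set G := fromBlocks 0 L Lᵀ 0
  have hG : G * fromBlocks 0 L⁻¹ᵀ L⁻¹ 0 = 1 := by
    simp [G, fromBlocks_multiply, ← transpose_mul, mul_nonsing_inv _ hL, nonsing_inv_mul _ hL,
      fromBlocks_one]
  have hsymm : G.toBilin'.IsSymm := isSymm_toBilin'_iff_isSymm.2 (by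
    simp [G, IsSymm, fromBlocks_transpose])
  have hnondeg : G.toBilin'.Nondegenerate :=
    LinearMap.BilinForm.nondegenerate_toBilin'_iff_det_ne_zero.2
      (left_ne_zero_of_mul_eq_one (by rw [← det_mul, hG, det_one]))
  have := LinearMap.BilinForm.two_mul_finrank_le_of_isotropic hsymm hnondeg W fun u hu => by
    have hsplit : u ⬝ᵥ G *ᵥ u =
        (u ∘ Sum.inl) ⬝ᵥ L *ᵥ (u ∘ Sum.inr) + (u ∘ Sum.inr) ⬝ᵥ Lᵀ *ᵥ (u ∘ Sum.inl) := by
      simp [G, fromBlocks_mulVec, dotProduct, Fintype.sum_sum_type]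
    rw [toBilin'_apply', hsplit, dotProduct_mulVec (u ∘ Sum.inr), vecMul_transpose,
      dotProduct_comm (L *ᵥ _), hW u hu, add_zero]
  simp only [Module.finrank_fintype_fun_eq_card, Fintype.card_sum] at this
  omega

lemma Jmat_transpose : Jmatᵀ = -Jmat := by
  ext i j; fin_cases i <;> fin_cases j <;> simp [Jmat]

-- `i ↦ (i % 2, i / 2)`: the position of `i` inside its `2 × 2` block, and that block.
def finTwoMulEquivProd (r : ℕ) : Fin (2 * r) ≃ Fin 2 × Fin r :=
  (finCongr (Nat.mul_comm 2 r)).trans (finProdFinEquiv.symm.trans (Equiv.prodComm _ _))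

lemma Jbar_eq_submatrix_blockDiagonal (r : ℕ) :
    Jbar r = (blockDiagonal fun _ : Fin r => Jmat).submatrix
      (finTwoMulEquivProd r) (finTwoMulEquivProd r) := by
  ext i j
  simp [Jbar, finTwoMulEquivProd, blockDiagonal_apply, Fin.ext_iff, Fin.divNat, Fin.modNat]

lemma Jbar_transpose (r : ℕ) : (Jbar r)ᵀ = -Jbar r := by
  rw [Jbar_eq_submatrix_blockDiagonal, transpose_submatrix, blockDiagonal_transpose]
  simp only [Jmat_transpose]
  rw [show (fun _ : Fin r => -Jmat) = -fun _ => Jmat from rfl, blockDiagonal_neg]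
  rfl

lemma det_Jbar (r : ℕ) : (Jbar r).det = 1 := by
  rw [Jbar_eq_submatrix_blockDiagonal, det_submatrix_equiv_self, det_blockDiagonal]
  simp [Jmat, det_fin_two_of]

lemma Jtilde_submatrix {n r : ℕ} {o : Type*} (h : 2 * r ≤ n) (g : o → Fin n)
    (hg : ∀ k, 2 * r ≤ (g k : ℕ)) :
    (Jtilde n r).submatrix (Sum.elim (Fin.castLE h) g) (Sum.elim (Fin.castLE h) g) =
      fromBlocks (Jbar r) 0 0 0 := by
  ext (i | k) (j | l)
  · simp [Jtilde]
  · simp [Jtilde, (hg l).not_gt]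
  · simp [Jtilde, (hg k).not_gt]
  · simp [Jtilde, (hg k).not_gt]

lemma dotProduct_Jbar_inv_mulVec_eq_zero {n r : ℕ} (h : 2 * r ≤ n)
    {v : Matrix (Fin n) (Fin n) ℝ} (hv : vᵀ = -v)
    (hrank : ∀ t : ℝ, (Jtilde n r + t • v).rank ≤ 2 * r)
    {j₁ j₂ : Fin n} (hj₁ : 2 * r ≤ (j₁ : ℕ)) (hj₂ : 2 * r ≤ (j₂ : ℕ)) :
    (fun i => v (Fin.castLE h i) j₁) ⬝ᵥ (Jbar r)⁻¹ *ᵥ (fun i => v (Fin.castLE h i) j₂) = 0 := by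
  set e := Sum.elim (Fin.castLE h) ![j₁, j₂]
  have hdet : ∀ t : ℝ, (fromBlocks (Jbar r) 0 0 0 + t • v.submatrix e e).det = 0 := fun t => by
    have hsub : (Jtilde n r + t • v).submatrix e e =
        fromBlocks (Jbar r) 0 0 0 + t • v.submatrix e e := by
      rw [← Jtilde_submatrix h ![j₁, j₂] (Fin.forall_fin_two.2 ⟨hj₁, hj₂⟩)]
      rfl
    rw [← hsub]
    exact det_submatrix_eq_zero_of_rank_lt _ _ (by simpa using (hrank t).trans_lt (by omega))
  have := transpose_mul_inv_mul_toBlocks₁₂_eq_zero (by simp [det_Jbar]) (Jbar_transpose r)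
    (by rw [transpose_submatrix, hv]; rfl) hdet
  rw [dotProduct_mulVec]
  simpa [mul_apply, dotProduct, vecMul, toBlocks₁₂, e] using
    congrFun (congrFun this 0) 1

def topColumns {n r : ℕ} (h : 2 * r ≤ n) (j₁ j₂ : Fin n) :
    Matrix (Fin n) (Fin n) ℝ →ₗ[ℝ] (Fin (2 * r) ⊕ Fin (2 * r) → ℝ) :=
  LinearMap.pi (Sum.elim (fun i => entryLin n (Fin.castLE h i) j₁)
    (fun i => entryLin n (Fin.castLE h i) j₂))

lemma finrank_map_topColumns_le {n r : ℕ} (h : 2 * r ≤ n)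
    (V : Submodule ℝ (Matrix (Fin n) (Fin n) ℝ)) (hanti : ∀ v ∈ V, vᵀ = -v)
    (hrank : ∀ v ∈ V, (Jtilde n r + v).rank ≤ 2 * r)
    {j₁ j₂ : Fin n} (hj₁ : 2 * r ≤ (j₁ : ℕ)) (hj₂ : 2 * r ≤ (j₂ : ℕ)) :
    Module.finrank ℝ (V.map (topColumns h j₁ j₂)) ≤ 2 * r := by
  simpa using finrank_le_of_forall_dotProduct_mulVec_eq_zero (L := (Jbar r)⁻¹)
    (isUnit_nonsing_inv_det _ (by simp [det_Jbar])) (V.map (topColumns h j₁ j₂)) fun u hu => by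
      obtain ⟨v, hv, rfl⟩ := Submodule.mem_map.1 hu
      exact dotProduct_Jbar_inv_mulVec_eq_zero h (hanti v hv)
        (fun t => hrank _ (V.smul_mem t hv)) hj₁ hj₂

/-- with `J̃ + v` of rank `2r` for all `v` in a linear subspace `V` of
antisymmetric matrices, and `j₁ ≠ j₂` two indices among `2r+1, …, n` (1-based), the image
of `V` under `v ↦ (v_{1,j₁},…,v_{2r,j₁}, v_{1,j₂},…,v_{2r,j₂}) ∈ ℝ^{4r}` has dimension at
most `2r`. -/
theorem stmt_10 (n r : ℕ)
    (V : Submodule ℝ (Matrix (Fin n) (Fin n) ℝ))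
    (hanti : ∀ v ∈ V, vᵀ = -v)
    (hrank : ∀ v ∈ V, (Jtilde n r + v).rank = 2 * r)
    (j₁ j₂ : Fin n) (hj₁ : 2 * r ≤ (j₁ : ℕ)) (hj₂ : 2 * r ≤ (j₂ : ℕ)) :
    Module.finrank ℝ (V.map (LinearMap.pi fun x : Fin (4 * r) =>
      if hx : (x : ℕ) < 2 * r then entryLin n ⟨(x : ℕ), by omega⟩ j₁
      else entryLin n ⟨(x : ℕ) - 2 * r, by have := x.2; omega⟩ j₂)) ≤ 2 * r := by
  have h : 2 * r ≤ n := hj₁.trans j₁.isLt.le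
  let e : Fin (2 * r) ⊕ Fin (2 * r) ≃ Fin (4 * r) := finSumFinEquiv.trans (finCongr (by ring))
  rw [← LinearEquiv.finrank_map_eq (LinearEquiv.funCongrLeft ℝ ℝ e), ← Submodule.map_comp]
  refine (congrArg (fun f => Module.finrank ℝ (V.map f)) ?_).trans_le
    (finrank_map_topColumns_le h V hanti (fun v hv => (hrank v hv).le) hj₁ hj₂)
  refine LinearMap.ext fun v => funext fun i => ?_
  rcases i with i | i <;> simp [e, topColumns, entryLin, Fin.castLE]
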